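/- Assume D := max{d_A,d_B} ≤ d³ where d := min{d_A,d_B}. Then for every separable state ρ on ℂ^{d_A} ⊗ ℂ^{d_B} in Filter Normal Form, the product of all d² operator-Schmidt coefficients (all singular values of the correlation matrix 𝒞) satisfies Π_{k=1}^{d²} σ_k(𝒞) ≤ α·β^{d²−1}, where α = 1/√(Dd) and β = √( (D−1)/(D(d²−1)) · (d−1)/(d(d²−1)) ). -/

import Mathlib

open Matrix Finset
open scoped Kronecker ComplexOrder

noncomputable section

/-- An orthonormal family of Hermitian matrices with respect to the
Hilbert–Schmidt inner product `⟨X,Y⟩ = tr (X * Y)`. -/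
def IsHSOrthonormal {n m : ℕ} (A : Fin m → Matrix (Fin n) (Fin n) ℂ) : Prop :=
  (∀ i, (A i).IsHermitian) ∧
  ∀ i j, (A i * A j).trace = if i = j then 1 else 0

/-- A density matrix: positive semidefinite with unit trace. -/
def IsDensityMatrix {n : Type*} [Fintype n] [DecidableEq n] (ρ : Matrix n n ℂ) : Prop :=
  ρ.PosSemidef ∧ ρ.trace = 1

/-- The correlation matrix `𝒞_{ij} = tr (ρ (A_i ⊗ B_j))` (a real number since the
operators involved are Hermitian). -/
def corrMat {dA dB : ℕ} (ρ : Matrix (Fin dA × Fin dB) (Fin dA × Fin dB) ℂ)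
    (A : Fin (dA ^ 2) → Matrix (Fin dA) (Fin dA) ℂ)
    (B : Fin (dB ^ 2) → Matrix (Fin dB) (Fin dB) ℂ) :
    Matrix (Fin (dA ^ 2)) (Fin (dB ^ 2)) ℝ :=
  fun i j => (ρ * (A i ⊗ₖ B j)).trace.re

/-- The rectangular "diagonal" matrix with the entries of `σ` on the diagonal. -/
def svdDiag (m n r : ℕ) (σ : Fin r → ℝ) : Matrix (Fin m) (Fin n) ℝ :=
  fun i j => if h : (i : ℕ) = (j : ℕ) ∧ (i : ℕ) < r then σ ⟨(i : ℕ), h.2⟩ else 0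

/-- `σ` is the decreasingly sorted vector of singular values of `C`. -/
def IsSingularValues {m n r : ℕ} (C : Matrix (Fin m) (Fin n) ℝ) (σ : Fin r → ℝ) : Prop :=
  (∀ k, 0 ≤ σ k) ∧ Antitone σ ∧
  ∃ U : Matrix (Fin m) (Fin m) ℝ, ∃ V : Matrix (Fin n) (Fin n) ℝ,
    Uᵀ * U = 1 ∧ Vᵀ * V = 1 ∧ C = U * svdDiag m n r σ * Vᵀ

/-- A separable bipartite state. -/
def SeparableState {dA dB : ℕ} (ρ : Matrix (Fin dA × Fin dB) (Fin dA × Fin dB) ℂ) : Prop :=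
  ∃ (n : ℕ) (w : Fin n → ℝ) (O : Fin n → Matrix (Fin dA) (Fin dA) ℂ)
    (Q : Fin n → Matrix (Fin dB) (Fin dB) ℂ),
    (∀ k, 0 ≤ w k) ∧ (∑ k, w k = 1) ∧
    (∀ k, IsDensityMatrix (O k)) ∧ (∀ k, IsDensityMatrix (Q k)) ∧
    ρ = ∑ k, (w k : ℂ) • (O k ⊗ₖ Q k)

/-- Filter Normal Form: all traceless local observables have vanishing expectation. -/
def IsFNF {dA dB : ℕ} (ρ : Matrix (Fin dA × Fin dB) (Fin dA × Fin dB) ℂ) : Prop :=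
  (∀ A : Matrix (Fin dA) (Fin dA) ℂ, A.IsHermitian → A.trace = 0 →
    (ρ * (A ⊗ₖ (1 : Matrix (Fin dB) (Fin dB) ℂ))).trace = 0) ∧
  (∀ B : Matrix (Fin dB) (Fin dB) ℂ, B.IsHermitian → B.trace = 0 →
    (ρ * ((1 : Matrix (Fin dA) (Fin dA) ℂ) ⊗ₖ B)).trace = 0)

/-- The Correlation Minor Norm with parameters `h`, `p`, expressed in terms of the
singular values `σ`. -/
def CMN {r : ℕ} (σ : Fin r → ℝ) (h : ℕ) (p : ℝ) : ℝ :=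
  (∑ R ∈ Finset.univ.powersetCard h, ∏ k ∈ R, σ k ^ p) ^ (1 / p)

/-- The Correlation Minor Norm with `p = ∞`: the product of the `h` largest singular
values (the singular values being sorted decreasingly). -/
def CMNinf {r : ℕ} (σ : Fin r → ℝ) (h : ℕ) : ℝ :=
  ∏ k ∈ Finset.univ.filter (fun k : Fin r => (k : ℕ) < h), σ k

/-- The `h`-th elementary symmetric polynomial evaluated at `x`. -/
def esym {n : ℕ} (h : ℕ) (x : Fin n → ℝ) : ℝ :=
  ∑ R ∈ Finset.univ.powersetCard h, ∏ k ∈ R, x k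

/-- An orthonormal family of vectors in `ℂ^n`. -/
def IsONFamily {n r : ℕ} (v : Fin r → (Fin n → ℂ)) : Prop :=
  ∀ k l, star (v k) ⬝ᵥ v l = if k = l then 1 else 0

/-- The rank-one projection `|v⟩⟨v|`. -/
def projOf {n : ℕ} (v : Fin n → ℂ) : Matrix (Fin n) (Fin n) ℂ :=
  Matrix.vecMulVec v (star v)

/-- The post-measurement state `Π[ρ] = Σ_l (|l⟩⟨l| ⊗ 𝟙) ρ (|l⟩⟨l| ⊗ 𝟙)` for the
projective measurement on Alice's side given by the orthonormal basis `e`. -/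
def measured {dA dB : ℕ} (ρ : Matrix (Fin dA × Fin dB) (Fin dA × Fin dB) ℂ)
    (e : Fin dA → (Fin dA → ℂ)) : Matrix (Fin dA × Fin dB) (Fin dA × Fin dB) ℂ :=
  ∑ l, (projOf (e l) ⊗ₖ (1 : Matrix (Fin dB) (Fin dB) ℂ)) * ρ *
       (projOf (e l) ⊗ₖ (1 : Matrix (Fin dB) (Fin dB) ℂ))

/-- A regular, coherent, degree-1 quantum design with `r = 1`: a family of rank-one
orthogonal projections summing to `(v/b)·𝟙` whose pairwise overlaps are constant. -/
def IsQDesign {b v : ℕ} (P : Fin v → Matrix (Fin b) (Fin b) ℂ) : Prop :=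
  (∀ k, (P k).IsHermitian) ∧ (∀ k, P k * P k = P k) ∧ (∀ k, (P k).trace = 1) ∧
  (∑ k, P k) = ((v : ℂ) / (b : ℂ)) • 1 ∧
  ∃ μ : ℝ, ∀ k l, k ≠ l → (P k * P l).trace = (μ : ℂ)

/-- A classical-quantum state `χ = Σ_l q_l |l⟩⟨l| ⊗ ρ_l`. -/
def IsCQState {dA dB : ℕ} (χ : Matrix (Fin dA × Fin dB) (Fin dA × Fin dB) ℂ) : Prop :=
  ∃ e : Fin dA → (Fin dA → ℂ), IsONFamily e ∧
  ∃ (q : Fin dA → ℝ) (τ : Fin dA → Matrix (Fin dB) (Fin dB) ℂ),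
    (∀ l, 0 ≤ q l) ∧ (∑ l, q l = 1) ∧ (∀ l, IsDensityMatrix (τ l)) ∧
    χ = ∑ l, (q l : ℂ) • (projOf (e l) ⊗ₖ τ l)

/-- Squared Frobenius norm. -/
def frobSq {n : Type*} [Fintype n] (M : Matrix n n ℂ) : ℝ :=
  ∑ i, ∑ j, Complex.normSq (M i j)

/-- Geometric quantum discord with respect to Alice's subsystem. -/
def geoDiscord {dA dB : ℕ} (ρ : Matrix (Fin dA × Fin dB) (Fin dA × Fin dB) ℂ) : ℝ :=
  sInf {x : ℝ | ∃ χ, IsCQState χ ∧ x = frobSq (ρ - χ)}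

/-- The set of values `M_{h,p}(Π[ρ])^p` over all projective measurements `Π` on
Alice's subsystem. -/
def measuredCMNSet {dA dB : ℕ} (ρ : Matrix (Fin dA × Fin dB) (Fin dA × Fin dB) ℂ)
    (A : Fin (dA ^ 2) → Matrix (Fin dA) (Fin dA) ℂ)
    (B : Fin (dB ^ 2) → Matrix (Fin dB) (Fin dB) ℂ) (h : ℕ) (p : ℝ) : Set ℝ :=
  {x | ∃ e : Fin dA → (Fin dA → ℂ), IsONFamily e ∧
    ∃ σ' : Fin (min dA dB ^ 2) → ℝ,
      IsSingularValues (corrMat (measured ρ e) A B) σ' ∧ x = CMN σ' h p ^ p}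

/-- The vector `Σ_k s_k |φ_k⟩⊗|ξ_k⟩` of a Schmidt decomposition. -/
def pureVec {dA dB r : ℕ} (s : Fin r → ℝ) (φ : Fin r → (Fin dA → ℂ))
    (ξ : Fin r → (Fin dB → ℂ)) : Fin dA × Fin dB → ℂ :=
  fun i => ∑ k, (s k : ℂ) * φ k i.1 * ξ k i.2

/-!
Write `ρ = ∑ⱼ pⱼ Oⱼ ⊗ Qⱼ` and let `aⱼ`, `bⱼ` be the Hilbert–Schmidt coordinate vectors of `Oⱼ`,
`Qⱼ`, so that `𝒞 = ∑ⱼ pⱼ aⱼ bⱼᵀ`, `‖aⱼ‖, ‖bⱼ‖ ≤ 1` (purity) and `⟪aⱼ, u⟫ = 1/√d_A`, where `u` is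
the unit coordinate vector of `𝟙/√d_A` (and likewise `w` on B's side). Filter Normal Form says
`∑ⱼ pⱼ aⱼ = u/√d_A` and `∑ⱼ pⱼ bⱼ = w/√d_B`, hence `𝒞 w = α u` and `𝒞ᵀ u = α w` with
`α = 1/√(d_A d_B)`. A Householder reflection turns the given singular value decomposition into
one with `u`, `w` as the singular vectors of some `σ_{k₀} = α`. In that basis every other
`σ_k = ∑ⱼ pⱼ (Uᵀaⱼ)_k (Vᵀbⱼ)_k` only sees the components of `aⱼ`, `bⱼ` orthogonal to `u`, `w`, of
squared length at most `1 - 1/d_A` and `1 - 1/d_B`; Cauchy–Schwarz gives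
`∑_{k ≠ k₀} σ_k ≤ √(1 - 1/d_A) √(1 - 1/d_B)`, and AM–GM on these `d² - 1` values finishes.
-/

namespace Matrix

variable {n : Type*} [Fintype n] [DecidableEq n]

/-- This is `1` for `h = 0`, because `2 / 0 = 0`. -/
def householder (h : n → ℝ) : Matrix n n ℝ := 1 - (2 / (h ⬝ᵥ h)) • vecMulVec h h

lemma householder_transpose (h : n → ℝ) : (householder h)ᵀ = householder h := by
  simp [householder, transpose_vecMulVec]

lemma householder_mul_self (h : n → ℝ) : householder h * householder h = 1 := by
  have hsq : vecMulVec h h * vecMulVec h h = (h ⬝ᵥ h) • vecMulVec h h := by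
    rw [vecMulVec_mul, vecMul_vecMulVec, vecMulVec_smul]
  by_cases h0 : h ⬝ᵥ h = 0
  · simp [householder, h0]
  · have hc : 2 / (h ⬝ᵥ h) * (2 / (h ⬝ᵥ h)) * (h ⬝ᵥ h) = 2 / (h ⬝ᵥ h) + 2 / (h ⬝ᵥ h) := by
      field_simp; ring
    simp only [householder, Matrix.sub_mul, Matrix.mul_sub, Matrix.one_mul, Matrix.mul_one,
      smul_mul_smul_comm, hsq, smul_smul, hc, add_smul]
    abel

lemma householder_sub_mulVec {x e : n → ℝ} (hxe : x ⬝ᵥ x = e ⬝ᵥ e) :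
    householder (x - e) *ᵥ e = x := by
  by_cases h0 : (x - e) ⬝ᵥ (x - e) = 0
  · rw [dotProduct_self_eq_zero, sub_eq_zero] at h0
    simp [householder, h0]
  · have hnorm : (x - e) ⬝ᵥ (x - e) = -2 * ((x - e) ⬝ᵥ e) := by
      simp only [sub_dotProduct, dotProduct_sub, dotProduct_comm e x, hxe]; ring
    have hc : 2 / ((x - e) ⬝ᵥ (x - e)) * ((x - e) ⬝ᵥ e) = -1 := by
      rw [hnorm] at h0 ⊢
      rw [div_mul_eq_mul_div, div_eq_iff h0]
      ring
    rw [householder, sub_mulVec, one_mulVec, smul_mulVec, vecMulVec_mulVec, op_smul_eq_smul,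
      smul_smul, hc]
    simp

lemma householder_mul_comm {m : Type*} [Fintype m] [DecidableEq m] (D : Matrix m n ℝ)
    {h : m → ℝ} {h' : n → ℝ} {α : ℝ}
    (hD : D *ᵥ h' = α • h) (hDt : Dᵀ *ᵥ h = α • h') (hh : h ⬝ᵥ h = h' ⬝ᵥ h') :
    householder h * D = D * householder h' := by
  rw [householder, householder, Matrix.sub_mul, Matrix.mul_sub, Matrix.one_mul, Matrix.mul_one,
    Matrix.smul_mul, Matrix.mul_smul, vecMulVec_mul, mul_vecMulVec, ← mulVec_transpose, hD, hDt,
    hh, smul_vecMulVec, vecMulVec_smul]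

lemma mulVec_dotProduct_mulVec_of_transpose_mul_self {m : Type*} [Fintype m]
    {A : Matrix m n ℝ} (hA : Aᵀ * A = 1) (v w : n → ℝ) : A *ᵥ v ⬝ᵥ A *ᵥ w = v ⬝ᵥ w := by
  rw [dotProduct_mulVec, ← mulVec_transpose, mulVec_mulVec, hA, one_mulVec]

lemma transpose_mulVec_apply {m R : Type*} [Fintype m] [CommSemiring R] (W : Matrix m n R)
    (v : m → R) (i : n) : (Wᵀ *ᵥ v) i = v ⬝ᵥ W *ᵥ Pi.single i 1 := by
  rw [mulVec_single_one, mulVec_transpose]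
  rfl

end Matrix

section svdDiag

variable {m n r : ℕ} (σ : Fin r → ℝ)

lemma svdDiag_transpose : (svdDiag m n r σ)ᵀ = svdDiag n m r σ := by
  ext i j
  simp only [transpose_apply, svdDiag]
  by_cases h : (j : ℕ) = i ∧ (j : ℕ) < r
  · rw [dif_pos h, dif_pos ⟨h.1.symm, h.1 ▸ h.2⟩]
    simp only [h.1]
  · rw [dif_neg h, dif_neg (fun h' : (i : ℕ) = j ∧ (i : ℕ) < r => h ⟨h'.1.symm, h'.1 ▸ h'.2⟩)]

lemma svdDiag_castLE_castLE (hm : r ≤ m) (hn : r ≤ n) (k : Fin r) :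
    svdDiag m n r σ (Fin.castLE hm k) (Fin.castLE hn k) = σ k := by
  simp [svdDiag]

lemma svdDiag_mulVec_castLE (hm : r ≤ m) (hn : r ≤ n) (v : Fin n → ℝ) (k : Fin r) :
    (svdDiag m n r σ *ᵥ v) (Fin.castLE hm k) = σ k * v (Fin.castLE hn k) := by
  rw [mulVec, dotProduct, Finset.sum_eq_single (Fin.castLE hn k)]
  · rw [svdDiag_castLE_castLE]
  · intro j _ hj
    simp only [svdDiag, Fin.val_castLE]
    rw [dif_neg (fun h => hj (Fin.ext (by simp [← h.1]))), zero_mul]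
  · simp

lemma svdDiag_mulVec_of_le (v : Fin n → ℝ) {i : Fin m} (hi : r ≤ i) :
    (svdDiag m n r σ *ᵥ v) i = 0 := by
  simp [mulVec, dotProduct, svdDiag, hi.not_gt]

lemma svdDiag_mulVec_single (hm : r ≤ m) (hn : r ≤ n) (k : Fin r) :
    svdDiag m n r σ *ᵥ Pi.single (Fin.castLE hn k) 1 = σ k • Pi.single (Fin.castLE hm k) 1 := by
  ext i
  simp only [mulVec_single, MulOpposite.op_one, Pi.smul_apply, col_apply, svdDiag,
    Fin.val_castLE, smul_dite, one_smul, smul_zero, Pi.single_apply, Fin.ext_iff, smul_eq_mul,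
    mul_ite, mul_one, mul_zero]
  by_cases h : (i : ℕ) = k <;> simp [h]

lemma exists_eq_of_svdDiag_mulVec_eq_smul (hm : r ≤ m) (hn : r ≤ n) (hσ : ∀ k, 0 ≤ σ k)
    {α : ℝ} (hα : 0 < α) {x : Fin m → ℝ} {y : Fin n → ℝ} (hx : x ≠ 0)
    (hDy : svdDiag m n r σ *ᵥ y = α • x) (hDx : svdDiag n m r σ *ᵥ x = α • y) :
    ∃ k, σ k = α ∧ y (Fin.castLE hn k) = x (Fin.castLE hm k) := by
  obtain ⟨i, hi⟩ := Function.ne_iff.mp hx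
  have hir : (i : ℕ) < r := by
    by_contra! hri
    have := congrFun hDy i
    rw [svdDiag_mulVec_of_le σ y hri, Pi.smul_apply, smul_eq_mul] at this
    exact hi (by simpa [hα.ne'] using this.symm)
  set k : Fin r := ⟨i, hir⟩
  have hy := congrFun hDy (Fin.castLE hm k)
  have hx := congrFun hDx (Fin.castLE hn k)
  rw [svdDiag_mulVec_castLE σ hm hn, Pi.smul_apply, smul_eq_mul] at hy
  rw [svdDiag_mulVec_castLE σ hn hm, Pi.smul_apply, smul_eq_mul] at hx
  have hxk : x (Fin.castLE hm k) ≠ 0 := hi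
  have hk : σ k = α := by
    have h : (σ k - α) * ((σ k + α) * x (Fin.castLE hm k)) = 0 := by
      linear_combination σ k * hx + α * hy
    have := hσ k
    rcases mul_eq_zero.mp h with h | h
    · linarith
    · exact absurd h (mul_ne_zero (by linarith) hxk)
  refine ⟨k, hk, ?_⟩
  rw [hk] at hx
  exact (mul_left_cancel₀ hα.ne' hx).symm

lemma exists_orthogonal_of_svdDiag_mulVec_eq_smul (hm : r ≤ m) (hn : r ≤ n)
    (hσ : ∀ k, 0 ≤ σ k) {α : ℝ} (hα : 0 < α) {x : Fin m → ℝ} {y : Fin n → ℝ}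
    (hx : x ⬝ᵥ x = 1) (hy : y ⬝ᵥ y = 1)
    (hDy : svdDiag m n r σ *ᵥ y = α • x) (hDx : svdDiag n m r σ *ᵥ x = α • y) :
    ∃ k, σ k = α ∧ ∃ (H : Matrix (Fin m) (Fin m) ℝ) (H' : Matrix (Fin n) (Fin n) ℝ),
      Hᵀ * H = 1 ∧ H'ᵀ * H' = 1 ∧ Hᵀ * svdDiag m n r σ * H' = svdDiag m n r σ ∧
      H *ᵥ Pi.single (Fin.castLE hm k) 1 = x ∧ H' *ᵥ Pi.single (Fin.castLE hn k) 1 = y := by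
  obtain ⟨k, hk, hyx⟩ := exists_eq_of_svdDiag_mulVec_eq_smul σ hm hn hσ hα
    (fun h => by simp [h] at hx) hDy hDx
  set e : Fin m → ℝ := Pi.single (Fin.castLE hm k) 1
  set e' : Fin n → ℝ := Pi.single (Fin.castLE hn k) 1
  have hcomm : householder (x - e) * svdDiag m n r σ = svdDiag m n r σ * householder (y - e') := by
    apply householder_mul_comm (α := α)
    · rw [mulVec_sub, hDy, svdDiag_mulVec_single, hk, smul_sub]
    · rw [svdDiag_transpose, mulVec_sub, hDx, svdDiag_mulVec_single, hk, smul_sub]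
    · simp [e, e', sub_dotProduct, dotProduct_sub, hx, hy, hyx]
  refine ⟨k, hk, householder (x - e), householder (y - e'), ?_, ?_, ?_,
    householder_sub_mulVec (by simp [e, hx]), householder_sub_mulVec (by simp [e', hy])⟩
  · rw [householder_transpose, householder_mul_self]
  · rw [householder_transpose, householder_mul_self]
  · rw [householder_transpose, hcomm, Matrix.mul_assoc, householder_mul_self, Matrix.mul_one]

end svdDiag

lemma IsSingularValues.exists_svd_of_mulVec_eq_smul {m n r : ℕ} {C : Matrix (Fin m) (Fin n) ℝ}
    {σ : Fin r → ℝ} (hσ : IsSingularValues C σ) (hm : r ≤ m) (hn : r ≤ n) {α : ℝ} (hα : 0 < α)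
    {u : Fin m → ℝ} {w : Fin n → ℝ} (hu : u ⬝ᵥ u = 1) (hw : w ⬝ᵥ w = 1)
    (hCw : C *ᵥ w = α • u) (hCu : Cᵀ *ᵥ u = α • w) :
    ∃ k, σ k = α ∧ ∃ (U : Matrix (Fin m) (Fin m) ℝ) (V : Matrix (Fin n) (Fin n) ℝ),
      Uᵀ * U = 1 ∧ Vᵀ * V = 1 ∧ Uᵀ * C * V = svdDiag m n r σ ∧
      U *ᵥ Pi.single (Fin.castLE hm k) 1 = u ∧ V *ᵥ Pi.single (Fin.castLE hn k) 1 = w := by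
  obtain ⟨hσ0, -, U, V, hU, hV, rfl⟩ := hσ
  have hU' : U * Uᵀ = 1 := mul_eq_one_comm.mp hU
  have hV' : V * Vᵀ = 1 := mul_eq_one_comm.mp hV
  have hDy : svdDiag m n r σ *ᵥ (Vᵀ *ᵥ w) = α • (Uᵀ *ᵥ u) := by
    rw [← mulVec_smul, ← hCw, mulVec_mulVec, mulVec_mulVec, ← Matrix.mul_assoc,
      ← Matrix.mul_assoc, hU, Matrix.one_mul]
  have hDx : svdDiag n m r σ *ᵥ (Uᵀ *ᵥ u) = α • (Vᵀ *ᵥ w) := by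
    rw [← mulVec_smul, ← hCu, mulVec_mulVec, mulVec_mulVec, transpose_mul, transpose_mul,
      transpose_transpose, svdDiag_transpose, ← Matrix.mul_assoc, ← Matrix.mul_assoc, hV,
      Matrix.one_mul]
  have hx : Uᵀ *ᵥ u ⬝ᵥ Uᵀ *ᵥ u = 1 := by
    rw [mulVec_dotProduct_mulVec_of_transpose_mul_self (by rwa [transpose_transpose]), hu]
  have hy : Vᵀ *ᵥ w ⬝ᵥ Vᵀ *ᵥ w = 1 := by
    rw [mulVec_dotProduct_mulVec_of_transpose_mul_self (by rwa [transpose_transpose]), hw]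
  obtain ⟨k, hk, H, H', hH, hH', hHD, hHe, hHe'⟩ :=
    exists_orthogonal_of_svdDiag_mulVec_eq_smul σ hm hn hσ0 hα hx hy hDy hDx
  refine ⟨k, hk, U * H, V * H', ?_, ?_, ?_, ?_, ?_⟩
  · rw [transpose_mul, Matrix.mul_assoc, ← Matrix.mul_assoc Uᵀ, hU, Matrix.one_mul, hH]
  · rw [transpose_mul, Matrix.mul_assoc, ← Matrix.mul_assoc Vᵀ, hV, Matrix.one_mul, hH']
  · rw [show (U * H)ᵀ * (U * svdDiag m n r σ * Vᵀ) * (V * H')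
        = Hᵀ * (Uᵀ * U) * svdDiag m n r σ * (Vᵀ * V) * H' by
          simp only [transpose_mul, Matrix.mul_assoc],
      hU, hV, Matrix.mul_one, Matrix.mul_one, hHD]
  · rw [← mulVec_mulVec, hHe, mulVec_mulVec, hU', one_mulVec]
  · rw [← mulVec_mulVec, hHe', mulVec_mulVec, hV', one_mulVec]
lemma sum_sq_erase_castLE_le {m r : ℕ} (hm : r ≤ m) (a : Fin m → ℝ) (k₀ : Fin r) :
    ∑ k ∈ univ.erase k₀, a (Fin.castLE hm k) ^ 2 ≤ a ⬝ᵥ a - a (Fin.castLE hm k₀) ^ 2 := by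
  rw [Finset.sum_erase_eq_sub (mem_univ k₀), sub_le_sub_iff_right]
  calc ∑ k, a (Fin.castLE hm k) ^ 2 = ∑ i ∈ univ.map (Fin.castLEEmb hm), a i ^ 2 := by
        rw [Finset.sum_map]; rfl
    _ ≤ ∑ i, a i ^ 2 := Finset.sum_le_univ_sum_of_nonneg fun i => sq_nonneg (a i)
    _ = a ⬝ᵥ a := by simp only [dotProduct, sq]

lemma sum_erase_castLE_mul_le {m n r : ℕ} (hm : r ≤ m) (hn : r ≤ n) (a : Fin m → ℝ)
    (b : Fin n → ℝ) (k₀ : Fin r) :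
    ∑ k ∈ univ.erase k₀, a (Fin.castLE hm k) * b (Fin.castLE hn k) ≤
      √(a ⬝ᵥ a - a (Fin.castLE hm k₀) ^ 2) * √(b ⬝ᵥ b - b (Fin.castLE hn k₀) ^ 2) :=
  (Real.sum_mul_le_sqrt_mul_sqrt _ _ _).trans <| by
    gcongr
    · exact sum_sq_erase_castLE_le hm a k₀
    · exact sum_sq_erase_castLE_le hn b k₀

lemma sum_erase_le_of_svdDiag_eq_sum {m n r K : ℕ} (hm : r ≤ m) (hn : r ≤ n) {σ : Fin r → ℝ}
    {p : Fin K → ℝ} (hp0 : ∀ j, 0 ≤ p j) (hp1 : ∑ j, p j = 1) {a : Fin K → Fin m → ℝ}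
    {b : Fin K → Fin n → ℝ} (hD : svdDiag m n r σ = ∑ j, p j • vecMulVec (a j) (b j))
    (k₀ : Fin r) {s t : ℝ} (has : ∀ j, a j (Fin.castLE hm k₀) = s)
    (hbt : ∀ j, b j (Fin.castLE hn k₀) = t)
    (haa : ∀ j, a j ⬝ᵥ a j ≤ 1) (hbb : ∀ j, b j ⬝ᵥ b j ≤ 1) :
    ∑ k ∈ univ.erase k₀, σ k ≤ √(1 - s ^ 2) * √(1 - t ^ 2) := by
  have hσ : ∀ k, σ k = ∑ j, p j * (a j (Fin.castLE hm k) * b j (Fin.castLE hn k)) := by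
    intro k
    rw [← svdDiag_castLE_castLE σ hm hn, hD]
    simp [Matrix.sum_apply, vecMulVec_apply]
  calc ∑ k ∈ univ.erase k₀, σ k
      = ∑ j, p j * ∑ k ∈ univ.erase k₀, a j (Fin.castLE hm k) * b j (Fin.castLE hn k) := by
        simp_rw [hσ, Finset.mul_sum]
        exact Finset.sum_comm
    _ ≤ ∑ j, p j * (√(1 - s ^ 2) * √(1 - t ^ 2)) := by
        gcongr with j
        · exact hp0 j
        refine (sum_erase_castLE_mul_le hm hn (a j) (b j) k₀).trans ?_
        rw [has, hbt]
        gcongr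
        · exact haa j
        · exact hbb j
    _ = √(1 - s ^ 2) * √(1 - t ^ 2) := by rw [← Finset.sum_mul, hp1, one_mul]

lemma Finset.prod_le_sum_div_card_pow {ι : Type*} (s : Finset ι) {z : ι → ℝ}
    (hz : ∀ i ∈ s, 0 ≤ z i) : ∏ i ∈ s, z i ≤ ((∑ i ∈ s, z i) / #s) ^ #s := by
  rcases s.eq_empty_or_nonempty with rfl | hs
  · simp
  have key := Real.geom_mean_le_arith_mean s (fun _ => 1) z (fun _ _ => zero_le_one)
    (by simpa using hs) hz
  simp only [Real.rpow_one, one_mul, sum_const, nsmul_eq_mul, mul_one] at key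
  have hcard : (#s : ℝ) ≠ 0 := by simpa using hs.ne_empty
  calc ∏ i ∈ s, z i = ((∏ i ∈ s, z i) ^ (#s : ℝ)⁻¹) ^ #s := by
        rw [← Real.rpow_natCast, ← Real.rpow_mul (prod_nonneg hz), inv_mul_cancel₀ hcard,
          Real.rpow_one]
    _ ≤ ((∑ i ∈ s, z i) / #s) ^ #s := by
        have := prod_nonneg hz
        gcongr

lemma prod_le_of_sum_erase_le {r : ℕ} {σ : Fin r → ℝ} (hσ : ∀ k, 0 ≤ σ k) (k₀ : Fin r) {S : ℝ}
    (hS : ∑ k ∈ univ.erase k₀, σ k ≤ S) :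
    ∏ k, σ k ≤ σ k₀ * (S / ((r : ℝ) - 1)) ^ (r - 1) := by
  have hcard : #(univ.erase k₀) = r - 1 := by simp
  have hr : ((r - 1 : ℕ) : ℝ) = (r : ℝ) - 1 := by rw [Nat.cast_sub k₀.pos, Nat.cast_one]
  have hsum : 0 ≤ ∑ k ∈ univ.erase k₀, σ k := sum_nonneg fun k _ => hσ k
  have hr1 : (0 : ℝ) ≤ r - 1 := by rw [← hr]; positivity
  rw [← mul_prod_erase _ _ (mem_univ k₀)]
  gcongr
  · exact hσ k₀
  calc ∏ k ∈ univ.erase k₀, σ k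
      ≤ ((∑ k ∈ univ.erase k₀, σ k) / #(univ.erase k₀)) ^ #(univ.erase k₀) :=
        prod_le_sum_div_card_pow _ fun k _ => hσ k
    _ ≤ (S / ((r : ℝ) - 1)) ^ (r - 1) := by
        rw [hcard, hr]
        gcongr

lemma sum_smul_vecMulVec_mulVec {m n K : Type*} [Fintype n] [Fintype K] {p : K → ℝ}
    {a : K → m → ℝ} {b : K → n → ℝ} {w : n → ℝ} {t : ℝ} (hbw : ∀ j, b j ⬝ᵥ w = t) :
    (∑ j, p j • vecMulVec (a j) (b j)) *ᵥ w = t • ∑ j, p j • a j := by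
  simp only [sum_mulVec, smul_mulVec, vecMulVec_mulVec, hbw, op_smul_eq_smul, Finset.smul_sum,
    smul_comm t]

theorem IsSingularValues.prod_le_of_eq_sum_smul_vecMulVec {m n r K : ℕ} (hm : r ≤ m) (hn : r ≤ n)
    {C : Matrix (Fin m) (Fin n) ℝ} {σ : Fin r → ℝ} (hσ : IsSingularValues C σ)
    {p : Fin K → ℝ} (hp0 : ∀ j, 0 ≤ p j) (hp1 : ∑ j, p j = 1)
    {a : Fin K → Fin m → ℝ} {b : Fin K → Fin n → ℝ} (hC : C = ∑ j, p j • vecMulVec (a j) (b j))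
    {u : Fin m → ℝ} {w : Fin n → ℝ} (hu : u ⬝ᵥ u = 1) (hw : w ⬝ᵥ w = 1)
    {s t : ℝ} (hs : 0 < s) (ht : 0 < t) (hau : ∀ j, a j ⬝ᵥ u = s) (hbw : ∀ j, b j ⬝ᵥ w = t)
    (haa : ∀ j, a j ⬝ᵥ a j ≤ 1) (hbb : ∀ j, b j ⬝ᵥ b j ≤ 1)
    (hpa : ∑ j, p j • a j = s • u) (hpb : ∑ j, p j • b j = t • w) :
    ∏ k, σ k ≤ s * t * (√(1 - s ^ 2) * √(1 - t ^ 2) / ((r : ℝ) - 1)) ^ (r - 1) := by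
  have hCw : C *ᵥ w = (s * t) • u := by
    rw [hC, sum_smul_vecMulVec_mulVec hbw, hpa, smul_smul, mul_comm]
  have hCu : Cᵀ *ᵥ u = (s * t) • w := by
    simp only [hC, transpose_sum, transpose_smul, transpose_vecMulVec]
    rw [sum_smul_vecMulVec_mulVec hau, hpb, smul_smul]
  obtain ⟨k₀, hk₀, U, V, hU, hV, hD, hUe, hVe⟩ :=
    hσ.exists_svd_of_mulVec_eq_smul hm hn (mul_pos hs ht) hu hw hCw hCu
  have hD' : svdDiag m n r σ = ∑ j, p j • vecMulVec (Uᵀ *ᵥ a j) (Vᵀ *ᵥ b j) := by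
    simp only [← hD, hC, Matrix.mul_sum, Matrix.sum_mul, Matrix.mul_smul, Matrix.smul_mul,
      mul_vecMulVec, vecMulVec_mul, mulVec_transpose]
  have hUU : Uᵀᵀ * Uᵀ = 1 := by rw [transpose_transpose]; exact mul_eq_one_comm.mp hU
  have hVV : Vᵀᵀ * Vᵀ = 1 := by rw [transpose_transpose]; exact mul_eq_one_comm.mp hV
  have hsum := sum_erase_le_of_svdDiag_eq_sum hm hn hp0 hp1 hD' k₀
    (fun j => by rw [transpose_mulVec_apply, hUe, hau])
    (fun j => by rw [transpose_mulVec_apply, hVe, hbw])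
    (fun j => by rw [mulVec_dotProduct_mulVec_of_transpose_mul_self hUU]; exact haa j)
    (fun j => by rw [mulVec_dotProduct_mulVec_of_transpose_mul_self hVV]; exact hbb j)
  simpa only [hk₀] using prod_le_of_sum_erase_le hσ.1 k₀ hsum

theorem Matrix.trace_mul_eq_sum_trace_mul_trace_mul {K n ι : Type*} [Field K] [Fintype n]
    [Fintype ι] [DecidableEq ι] {A : ι → Matrix n n K}
    (hcard : Fintype.card ι = Fintype.card n ^ 2)
    (hA : ∀ i j, (A i * A j).trace = if i = j then 1 else 0) (X Y : Matrix n n K) :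
    (X * Y).trace = ∑ i, (X * A i).trace * (A i * Y).trace := by
  have hli : LinearIndependent K A := by
    rw [Fintype.linearIndependent_iff]
    intro g hg j
    simpa [Finset.sum_mul, trace_sum, hA] using congrArg (fun M => (M * A j).trace) hg
  have hspan := hli.span_eq_top_of_card_eq_finrank' (by simp [Module.finrank_matrix, hcard, sq])
  obtain ⟨c, rfl⟩ :=
    (Submodule.mem_span_range_iff_exists_fun K).mp (hspan ▸ Submodule.mem_top (x := X))
  simp [Finset.sum_mul, trace_sum, hA]

lemma Matrix.IsHermitian.im_trace_mul_eq_zero {n : Type*} [Fintype n] {X Y : Matrix n n ℂ}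
    (hX : X.IsHermitian) (hY : Y.IsHermitian) : (X * Y).trace.im = 0 := by
  refine Complex.conj_eq_iff_im.mp ?_
  change star (X * Y).trace = _
  rw [← trace_conjTranspose, conjTranspose_mul, hX.eq, hY.eq, trace_mul_comm]

lemma IsDensityMatrix.re_trace_mul_self_le_one {n : Type*} [Fintype n] [DecidableEq n]
    {O : Matrix n n ℂ} (hO : IsDensityMatrix O) : (O * O).trace.re ≤ 1 := by
  obtain ⟨hpos, htr⟩ := hO
  have hsq : (O * O).trace = ∑ i, ((hpos.1.eigenvalues i ^ 2 : ℝ) : ℂ) := by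
    conv_lhs => rw [hpos.1.spectral_theorem, ← map_mul, Unitary.conjStarAlgAut_apply,
      trace_mul_cycle, Unitary.coe_star_mul_self, Matrix.one_mul, diagonal_mul_diagonal,
      trace_diagonal]
    simp [sq]
  have hsum : ∑ i, hpos.1.eigenvalues i = 1 := by
    have := hpos.1.trace_eq_sum_eigenvalues
    rw [htr] at this
    simpa using (congrArg Complex.re this).symm
  calc (O * O).trace.re = ∑ i, hpos.1.eigenvalues i ^ 2 := by
        simp only [hsq, Complex.re_sum, Complex.ofReal_re]
    _ ≤ (∑ i, hpos.1.eigenvalues i) ^ 2 :=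
        sum_sq_le_sq_sum_of_nonneg fun i _ => hpos.eigenvalues_nonneg i
    _ = 1 := by rw [hsum, one_pow]

/-- The coordinates of `X` along the Hilbert–Schmidt orthonormal family `A`; the traces
`tr (X * A i)` are real when `X` and the `A i` are Hermitian. -/
def hsCoords {n ι : Type*} [Fintype n] (A : ι → Matrix n n ℂ) (X : Matrix n n ℂ) : ι → ℝ :=
  fun i => (X * A i).trace.re

section hsCoords

variable {n : ℕ} {A : Fin (n ^ 2) → Matrix (Fin n) (Fin n) ℂ}

lemma IsHSOrthonormal.hsCoords_dotProduct_hsCoords (hA : IsHSOrthonormal A)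
    {X Y : Matrix (Fin n) (Fin n) ℂ} (hX : X.IsHermitian) (hY : Y.IsHermitian) :
    hsCoords A X ⬝ᵥ hsCoords A Y = (X * Y).trace.re := by
  rw [trace_mul_eq_sum_trace_mul_trace_mul (by simp) hA.2, Complex.re_sum]
  refine Finset.sum_congr rfl fun i _ => ?_
  rw [trace_mul_comm (A i), Complex.mul_re, (hX.im_trace_mul_eq_zero (hA.1 i)),
    (hY.im_trace_mul_eq_zero (hA.1 i)), mul_zero, sub_zero]
  rfl

lemma IsHSOrthonormal.inv_sqrt_smul_hsCoords_one_dotProduct_self (hA : IsHSOrthonormal A)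
    (hn : 0 < n) :
    ((√n)⁻¹ • hsCoords A 1) ⬝ᵥ ((√n)⁻¹ • hsCoords A 1) = 1 := by
  rw [smul_dotProduct, dotProduct_smul, hA.hsCoords_dotProduct_hsCoords isHermitian_one
    isHermitian_one, Matrix.mul_one, trace_one]
  simp [← mul_assoc, ← sq, hn.ne']

lemma IsHSOrthonormal.hsCoords_dotProduct_inv_sqrt_smul_hsCoords_one (hA : IsHSOrthonormal A)
    {O : Matrix (Fin n) (Fin n) ℂ} (hO : IsDensityMatrix O) :
    hsCoords A O ⬝ᵥ ((√n)⁻¹ • hsCoords A 1) = (√n)⁻¹ := by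
  rw [dotProduct_smul, hA.hsCoords_dotProduct_hsCoords hO.1.1 isHermitian_one, Matrix.mul_one,
    hO.2]
  simp

lemma IsHSOrthonormal.hsCoords_dotProduct_self_le_one (hA : IsHSOrthonormal A)
    {O : Matrix (Fin n) (Fin n) ℂ} (hO : IsDensityMatrix O) :
    hsCoords A O ⬝ᵥ hsCoords A O ≤ 1 := by
  rw [hA.hsCoords_dotProduct_hsCoords hO.1.1 hO.1.1]
  exact hO.re_trace_mul_self_le_one

end hsCoords

lemma Matrix.IsHermitian.sub_trace_div_smul_one {n : ℕ} {M : Matrix (Fin n) (Fin n) ℂ}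
    (hM : M.IsHermitian) : (M - (M.trace / n) • (1 : Matrix (Fin n) (Fin n) ℂ)).IsHermitian := by
  have htr : IsSelfAdjoint M.trace := by rw [IsSelfAdjoint, ← trace_conjTranspose, hM.eq]
  exact hM.sub (isHermitian_one.smul (htr.div (.natCast n)))

lemma Matrix.trace_sub_trace_div_smul_one {n : ℕ} (hn : 0 < n) (M : Matrix (Fin n) (Fin n) ℂ) :
    (M - (M.trace / n) • (1 : Matrix (Fin n) (Fin n) ℂ)).trace = 0 := by
  rw [trace_sub, trace_smul, trace_one, Fintype.card_fin, smul_eq_mul,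
    div_mul_cancel₀ _ (by exact_mod_cast hn.ne'), sub_self]

lemma trace_sum_smul_kronecker_mul_kronecker {m n K : Type*} [Fintype m] [Fintype n] [Fintype K]
    (p : K → ℝ) (O : K → Matrix m m ℂ) (Q : K → Matrix n n ℂ) (X : Matrix m m ℂ)
    (Y : Matrix n n ℂ) :
    ((∑ j, (p j : ℂ) • (O j ⊗ₖ Q j)) * (X ⊗ₖ Y)).trace =
      ∑ j, p j * ((O j * X).trace * (Q j * Y).trace) := by
  simp [Finset.sum_mul, trace_sum, ← mul_kronecker_mul, trace_kronecker]

section separable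

variable {dA dB K : ℕ} {p : Fin K → ℝ} {O : Fin K → Matrix (Fin dA) (Fin dA) ℂ}
  {Q : Fin K → Matrix (Fin dB) (Fin dB) ℂ}

lemma IsFNF.trace_mul_kronecker_one {ρ : Matrix (Fin dA × Fin dB) (Fin dA × Fin dB) ℂ}
    (hfnf : IsFNF ρ) (hdA : 0 < dA) {M : Matrix (Fin dA) (Fin dA) ℂ} (hM : M.IsHermitian) :
    (ρ * (M ⊗ₖ (1 : Matrix (Fin dB) (Fin dB) ℂ))).trace = M.trace / dA * ρ.trace := by
  have h := hfnf.1 _ hM.sub_trace_div_smul_one (trace_sub_trace_div_smul_one hdA M)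
  rw [← sub_add_cancel M ((M.trace / dA) • 1), add_kronecker, Matrix.mul_add, trace_add, h,
    zero_add, smul_kronecker, one_kronecker_one, Matrix.mul_smul, Matrix.mul_one, trace_smul,
    smul_eq_mul, sub_add_cancel]

lemma IsFNF.trace_mul_one_kronecker {ρ : Matrix (Fin dA × Fin dB) (Fin dA × Fin dB) ℂ}
    (hfnf : IsFNF ρ) (hdB : 0 < dB) {M : Matrix (Fin dB) (Fin dB) ℂ} (hM : M.IsHermitian) :
    (ρ * ((1 : Matrix (Fin dA) (Fin dA) ℂ) ⊗ₖ M)).trace = M.trace / dB * ρ.trace := by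
  have h := hfnf.2 _ hM.sub_trace_div_smul_one (trace_sub_trace_div_smul_one hdB M)
  rw [← sub_add_cancel M ((M.trace / dB) • 1), kronecker_add, Matrix.mul_add, trace_add, h,
    zero_add, kronecker_smul, one_kronecker_one, Matrix.mul_smul, Matrix.mul_one, trace_smul,
    smul_eq_mul, sub_add_cancel]

lemma IsFNF.sum_smul_hsCoords_fst (hfnf : IsFNF (∑ j, (p j : ℂ) • (O j ⊗ₖ Q j)))
    (htr : (∑ j, (p j : ℂ) • (O j ⊗ₖ Q j)).trace = 1) (hdA : 0 < dA) (hQ : ∀ j, (Q j).trace = 1)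
    {A : Fin (dA ^ 2) → Matrix (Fin dA) (Fin dA) ℂ} (hA : ∀ i, (A i).IsHermitian) :
    ∑ j, p j • hsCoords A (O j) = (dA : ℝ)⁻¹ • hsCoords A 1 := by
  ext i
  have h := hfnf.trace_mul_kronecker_one hdA (hA i)
  rw [htr, mul_one, trace_sum_smul_kronecker_mul_kronecker] at h
  simp only [hQ, mul_one] at h
  have h' := congrArg Complex.re h
  simp only [Complex.re_sum, Complex.re_ofReal_mul, Complex.div_natCast_re] at h'
  simp only [Finset.sum_apply, Pi.smul_apply, smul_eq_mul, hsCoords, Matrix.one_mul, h',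
    div_eq_inv_mul]

lemma IsFNF.sum_smul_hsCoords_snd (hfnf : IsFNF (∑ j, (p j : ℂ) • (O j ⊗ₖ Q j)))
    (htr : (∑ j, (p j : ℂ) • (O j ⊗ₖ Q j)).trace = 1) (hdB : 0 < dB) (hO : ∀ j, (O j).trace = 1)
    {B : Fin (dB ^ 2) → Matrix (Fin dB) (Fin dB) ℂ} (hB : ∀ i, (B i).IsHermitian) :
    ∑ j, p j • hsCoords B (Q j) = (dB : ℝ)⁻¹ • hsCoords B 1 := by
  ext i
  have h := hfnf.trace_mul_one_kronecker hdB (hB i)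
  rw [htr, mul_one, trace_sum_smul_kronecker_mul_kronecker] at h
  simp only [Matrix.mul_one, hO, one_mul] at h
  have h' := congrArg Complex.re h
  simp only [Complex.re_sum, Complex.re_ofReal_mul, Complex.div_natCast_re] at h'
  simp only [Finset.sum_apply, Pi.smul_apply, smul_eq_mul, hsCoords, Matrix.one_mul, h',
    div_eq_inv_mul]

lemma corrMat_sum_smul_kronecker (hO : ∀ j, (O j).IsHermitian) (hQ : ∀ j, (Q j).IsHermitian)
    {A : Fin (dA ^ 2) → Matrix (Fin dA) (Fin dA) ℂ} {B : Fin (dB ^ 2) → Matrix (Fin dB) (Fin dB) ℂ}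
    (hA : ∀ i, (A i).IsHermitian) (hB : ∀ i, (B i).IsHermitian) :
    corrMat (∑ j, (p j : ℂ) • (O j ⊗ₖ Q j)) A B =
      ∑ j, p j • vecMulVec (hsCoords A (O j)) (hsCoords B (Q j)) := by
  ext i k
  simp only [corrMat, trace_sum_smul_kronecker_mul_kronecker, Complex.re_sum, Matrix.sum_apply,
    Matrix.smul_apply, vecMulVec_apply, hsCoords, Complex.mul_re, Complex.ofReal_re,
    Complex.ofReal_im, (hO _).im_trace_mul_eq_zero (hA i), (hQ _).im_trace_mul_eq_zero (hB k),
    mul_zero, zero_mul, sub_zero, smul_eq_mul]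

end separable

lemma inv_sqrt_mul_inv_sqrt_eq_one_div_sqrt_max_mul_min (x y : ℝ) (hx : 0 ≤ x) :
    (√x)⁻¹ * (√y)⁻¹ = 1 / √(max x y * min x y) := by
  rw [max_mul_min, Real.sqrt_mul hx, one_div, mul_inv]

lemma sqrt_one_sub_inv_sqrt_sq_mul_div_eq (x y : ℝ) (hx : 1 ≤ x) (hy : 1 ≤ y) :
    √(1 - (√x)⁻¹ ^ 2) * √(1 - (√y)⁻¹ ^ 2) / (min x y ^ 2 - 1) =
      √((max x y - 1) / (max x y * (min x y ^ 2 - 1)) *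
        ((min x y - 1) / (min x y * (min x y ^ 2 - 1)))) := by
  have hq : 0 ≤ min x y ^ 2 - 1 := by nlinarith [le_min hx hy]
  have hx' : 1 - (√x)⁻¹ ^ 2 = (x - 1) / x := by
    rw [inv_pow, Real.sq_sqrt (by linarith)]; field_simp
  have hy' : 1 - (√y)⁻¹ ^ 2 = (y - 1) / y := by
    rw [inv_pow, Real.sq_sqrt (by linarith)]; field_simp
  have harg : (max x y - 1) / (max x y * (min x y ^ 2 - 1)) *
      ((min x y - 1) / (min x y * (min x y ^ 2 - 1))) =
      (1 - (√x)⁻¹ ^ 2) * (1 - (√y)⁻¹ ^ 2) / (min x y ^ 2 - 1) ^ 2 := by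
    rw [hx', hy', div_mul_div_comm, div_mul_div_comm, div_div]
    rcases le_total x y with h | h
    · rw [max_eq_right h, min_eq_left h]; congr 1 <;> ring
    · rw [max_eq_left h, min_eq_right h]; congr 1; ring
  rw [harg, Real.sqrt_div' _ (sq_nonneg _), Real.sqrt_sq hq,
    Real.sqrt_mul (by rw [hx']; exact div_nonneg (by linarith) (by linarith))]

theorem singular_value_product_bound_of_separable_FNF_general
    (dA dB : ℕ) (hdA : 0 < dA) (hdB : 0 < dB)
    (A : Fin (dA ^ 2) → Matrix (Fin dA) (Fin dA) ℂ)
    (B : Fin (dB ^ 2) → Matrix (Fin dB) (Fin dB) ℂ)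
    (hA : IsHSOrthonormal A) (hB : IsHSOrthonormal B)
    (ρ : Matrix (Fin dA × Fin dB) (Fin dA × Fin dB) ℂ)
    (hρ : IsDensityMatrix ρ) (hsep : SeparableState ρ) (hfnf : IsFNF ρ)
    (σ : Fin (min dA dB ^ 2) → ℝ)
    (hσ : IsSingularValues (corrMat ρ A B) σ) :
    ∏ k, σ k ≤
      (1 / Real.sqrt ((max dA dB : ℝ) * (min dA dB : ℝ))) *
        (Real.sqrt
          ((((max dA dB : ℝ) - 1) / ((max dA dB : ℝ) * ((min dA dB : ℝ) ^ 2 - 1))) *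
           (((min dA dB : ℝ) - 1) / ((min dA dB : ℝ) * ((min dA dB : ℝ) ^ 2 - 1))))) ^
          (min dA dB ^ 2 - 1) := by
  obtain ⟨K, p, O, Q, hp0, hp1, hO, hQ, rfl⟩ := hsep
  have hsA : (√(dA : ℝ))⁻¹ • ((√(dA : ℝ))⁻¹ • hsCoords A 1) = (dA : ℝ)⁻¹ • hsCoords A 1 := by
    rw [smul_smul, ← mul_inv, Real.mul_self_sqrt (Nat.cast_nonneg _)]
  have hsB : (√(dB : ℝ))⁻¹ • ((√(dB : ℝ))⁻¹ • hsCoords B 1) = (dB : ℝ)⁻¹ • hsCoords B 1 := by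
    rw [smul_smul, ← mul_inv, Real.mul_self_sqrt (Nat.cast_nonneg _)]
  refine (hσ.prod_le_of_eq_sum_smul_vecMulVec (Nat.pow_le_pow_left (min_le_left _ _) 2)
    (Nat.pow_le_pow_left (min_le_right _ _) 2) hp0 hp1
    (corrMat_sum_smul_kronecker (fun j => (hO j).1.1) (fun j => (hQ j).1.1) hA.1 hB.1)
    (hA.inv_sqrt_smul_hsCoords_one_dotProduct_self hdA)
    (hB.inv_sqrt_smul_hsCoords_one_dotProduct_self hdB)
    (inv_pos.mpr (Real.sqrt_pos.mpr (Nat.cast_pos.mpr hdA)))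
    (inv_pos.mpr (Real.sqrt_pos.mpr (Nat.cast_pos.mpr hdB)))
    (fun j => hA.hsCoords_dotProduct_inv_sqrt_smul_hsCoords_one (hO j))
    (fun j => hB.hsCoords_dotProduct_inv_sqrt_smul_hsCoords_one (hQ j))
    (fun j => hA.hsCoords_dotProduct_self_le_one (hO j))
    (fun j => hB.hsCoords_dotProduct_self_le_one (hQ j))
    (by rw [hsA]; exact hfnf.sum_smul_hsCoords_fst hρ.2 hdA (fun j => (hQ j).2) hA.1)
    (by rw [hsB]; exact hfnf.sum_smul_hsCoords_snd hρ.2 hdB (fun j => (hO j).2) hB.1)).trans_eq ?_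
  rw [inv_sqrt_mul_inv_sqrt_eq_one_div_sqrt_max_mul_min _ _ (Nat.cast_nonneg _), Nat.cast_pow,
    Nat.cast_min, sqrt_one_sub_inv_sqrt_sq_mul_div_eq _ _ (Nat.one_le_cast.mpr hdA)
    (Nat.one_le_cast.mpr hdB)]

/-- Assuming `D ≤ d³`, for every separable state in Filter Normal
Form the product of all `d²` operator-Schmidt coefficients satisfies
`Π_k σ_k ≤ α·β^{d²−1}` with `α = 1/√(Dd)` and
`β = √((D−1)/(D(d²−1)) · (d−1)/(d(d²−1)))`. -/
theorem singular_value_product_bound_of_separable_FNF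
    (dA dB : ℕ) (hdA : 0 < dA) (hdB : 0 < dB)
    (hDd : max dA dB ≤ min dA dB ^ 3)
    (A : Fin (dA ^ 2) → Matrix (Fin dA) (Fin dA) ℂ)
    (B : Fin (dB ^ 2) → Matrix (Fin dB) (Fin dB) ℂ)
    (hA : IsHSOrthonormal A) (hB : IsHSOrthonormal B)
    (ρ : Matrix (Fin dA × Fin dB) (Fin dA × Fin dB) ℂ)
    (hρ : IsDensityMatrix ρ) (hsep : SeparableState ρ) (hfnf : IsFNF ρ)
    (σ : Fin (min dA dB ^ 2) → ℝ)
    (hσ : IsSingularValues (corrMat ρ A B) σ) :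
    ∏ k, σ k ≤
      (1 / Real.sqrt ((max dA dB : ℝ) * (min dA dB : ℝ))) *
        (Real.sqrt
          ((((max dA dB : ℝ) - 1) / ((max dA dB : ℝ) * ((min dA dB : ℝ) ^ 2 - 1))) *
           (((min dA dB : ℝ) - 1) / ((min dA dB : ℝ) * ((min dA dB : ℝ) ^ 2 - 1))))) ^
          (min dA dB ^ 2 - 1) :=
  singular_value_product_bound_of_separable_FNF_general dA dB hdA hdB A B hA hB ρ hρ hsep hfnf σ hσ
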